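/- Let 1 ≤ p < ∞, 0 < ϑ < 1 and C_θ > 0. For η ≥ 0 and t > 0 set ν := |α|²η²p²/Re α, C₄(t) := C_θ · a₁^{d/2} · e^{−b₀ t} · (I_{d−1}(νt))^{1/p} and C₅(t) := C_θ · a₁^{(d+1)/2} · e^{−b₀ t} · (t|α|)^{−1/2} · (I_d(νt))^{1/p}. Then there exist constants C₇ > 0 and C₈ > 0, depending only on d, p, ϑ, C_θ and a₁ (and in particular not on ω, λ or η), such that for every ω ∈ ℝ with ω ≥ −b₀, every λ ∈ ℂ with Re λ > ω, and every η ≥ 0 with η² ≤ ϑ · Re α · (Re λ − ω)/(|α|² p²), one has ∫_0^∞ e^{−(Re λ) t} C₄(t) dt ≤ C₇/(Re λ − ω) and ∫_0^∞ e^{−(Re λ) t} C₅(t) dt ≤ C₈/(Re λ − ω)^{1/2}. -/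

import Mathlib

/-!
Bounding `s ^ m ≤ m! e^s` and completing the square gives `I_m(μ) ≤ K_m(ε) e^{(1 + ε/2) μ}` for
every `ε > 0`, since `√μ ≤ εμ/2 + 1/(2ε)`. With `ε = (1 - ϑ)/ϑ` and `ν ≤ ϑ (Re λ - ω)`, the factor
`I_m(νt)^{1/p}` grows at most like `e^{(1 + ϑ)/2 · (Re λ - ω) t}`, so both integrands are dominated
by `t^{a-1} e^{-r t}` with `r = (1 - ϑ)/2 · (Re λ - ω)` and `a = 1` resp. `a = 1/2`, whose
integrals are `Γ(a) / r^a`.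
-/

open MeasureTheory

/-- `I_m(μ) = (2/Γ(d/2)) ∫_0^∞ s^m e^{-s² + 2√μ s} ds`. -/
noncomputable def ouI (d m : ℕ) (μ : ℝ) : ℝ :=
  (2 / Real.Gamma ((d : ℝ) / 2)) *
    ∫ s in Set.Ioi (0 : ℝ), s ^ m * Real.exp (-s ^ 2 + 2 * Real.sqrt μ * s)

open Real Set
open scoped Nat

lemma setIntegral_Ioi_le_of_le_rpow_mul_exp {f : ℝ → ℝ} {A a r : ℝ} (ha : 0 < a) (hr : 0 < r)
    (hf₀ : ∀ t > 0, 0 ≤ f t) (hf : ∀ t > 0, f t ≤ A * (t ^ (a - 1) * exp (-(r * t)))) :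
    ∫ t in Ioi 0, f t ≤ A * Gamma a / r ^ a := by
  have hformula := integral_rpow_mul_exp_neg_mul_Ioi ha hr
  have hint : IntegrableOn (fun t ↦ t ^ (a - 1) * exp (-(r * t))) (Ioi 0) :=
    .of_integral_ne_zero (by rw [hformula]; positivity)
  calc ∫ t in Ioi 0, f t ≤ ∫ t in Ioi 0, A * (t ^ (a - 1) * exp (-(r * t))) := by
        refine integral_mono_of_nonneg ?_ (hint.const_mul A) ?_ <;>
          filter_upwards [self_mem_ae_restrict measurableSet_Ioi] with t ht
        exacts [hf₀ t ht, hf t ht]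
    _ = A * Gamma a / r ^ a := by
        rw [integral_const_mul, hformula, div_rpow zero_le_one hr.le, one_rpow]
        ring

lemma setIntegral_pow_mul_exp_neg_sq_add_mul_le (m : ℕ) (b : ℝ) :
    ∫ s in Ioi 0, s ^ m * exp (-s ^ 2 + b * s) ≤ m ! * exp ((b + 1) ^ 2 / 4) * √π := by
  have hint :
      Integrable fun s : ℝ ↦ m ! * exp ((b + 1) ^ 2 / 4) * exp (-(s - (b + 1) / 2) ^ 2) := by
    simpa using ((integrable_exp_neg_mul_sq one_pos).comp_sub_right ((b + 1) / 2)).const_mul _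
  calc ∫ s in Ioi 0, s ^ m * exp (-s ^ 2 + b * s)
      ≤ ∫ s in Ioi 0, m ! * exp ((b + 1) ^ 2 / 4) * exp (-(s - (b + 1) / 2) ^ 2) := by
        refine integral_mono_of_nonneg ?_ hint.integrableOn ?_ <;>
          filter_upwards [self_mem_ae_restrict measurableSet_Ioi] with s (hs : 0 < s)
        · positivity
        have hpow : s ^ m ≤ m ! * exp s := by
          have := pow_div_factorial_le_exp (x := s) hs.le m
          rwa [div_le_iff₀ (by positivity), mul_comm] at this
        calc s ^ m * exp (-s ^ 2 + b * s) ≤ m ! * exp s * exp (-s ^ 2 + b * s) := by gcongr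
          _ = m ! * exp ((b + 1) ^ 2 / 4) * exp (-(s - (b + 1) / 2) ^ 2) := by
            rw [mul_assoc, mul_assoc, ← exp_add, ← exp_add]
            ring_nf
    _ ≤ ∫ s, m ! * exp ((b + 1) ^ 2 / 4) * exp (-(s - (b + 1) / 2) ^ 2) :=
        setIntegral_le_integral hint (.of_forall fun _ ↦ by positivity)
    _ = m ! * exp ((b + 1) ^ 2 / 4) * √π := by
        rw [integral_const_mul, integral_sub_right_eq_self (fun s ↦ exp (-s ^ 2))]
        congr 1
        simpa using integral_gaussian 1

noncomputable def ouIConst (d m : ℕ) (ε : ℝ) : ℝ :=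
  2 / Gamma ((d : ℝ) / 2) * (m ! * exp (1 / (2 * ε) + 1 / 4) * √π)

lemma two_div_Gamma_half_nonneg (d : ℕ) : 0 ≤ 2 / Gamma ((d : ℝ) / 2) :=
  div_nonneg zero_le_two (Gamma_nonneg_of_nonneg (by positivity))

lemma ouIConst_nonneg (d m : ℕ) (ε : ℝ) : 0 ≤ ouIConst d m ε :=
  mul_nonneg (two_div_Gamma_half_nonneg d) (by positivity)

lemma ouIConst_pos {d : ℕ} (hd : 1 ≤ d) (m : ℕ) (ε : ℝ) : 0 < ouIConst d m ε := by
  have : 0 < Gamma ((d : ℝ) / 2) := Gamma_pos_of_pos (by positivity)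
  unfold ouIConst
  positivity

lemma ouI_nonneg (d m : ℕ) (μ : ℝ) : 0 ≤ ouI d m μ := by
  refine mul_nonneg (two_div_Gamma_half_nonneg d)
    (setIntegral_nonneg measurableSet_Ioi fun s hs ↦ ?_)
  have : (0 : ℝ) < s := hs
  positivity

lemma ouI_le (d m : ℕ) {μ ε : ℝ} (hμ : 0 ≤ μ) (hε : 0 < ε) :
    ouI d m μ ≤ ouIConst d m ε * exp ((1 + ε / 2) * μ) := by
  have hsqrt : √μ ≤ ε * μ / 2 + 1 / (2 * ε) := by
    rw [div_add_div _ _ two_ne_zero (by positivity), le_div_iff₀ (by positivity)]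
    have : (ε * √μ) ^ 2 = ε ^ 2 * μ := by rw [mul_pow, sq_sqrt hμ]
    nlinarith [sq_nonneg (ε * √μ - 1)]
  have hexp : exp ((2 * √μ + 1) ^ 2 / 4) ≤ exp (1 / (2 * ε) + 1 / 4) * exp ((1 + ε / 2) * μ) := by
    rw [← exp_add, exp_le_exp]
    nlinarith [sq_sqrt hμ]
  calc ouI d m μ ≤ 2 / Gamma ((d : ℝ) / 2) * (m ! * exp ((2 * √μ + 1) ^ 2 / 4) * √π) :=
        mul_le_mul_of_nonneg_left (setIntegral_pow_mul_exp_neg_sq_add_mul_le m _)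
          (two_div_Gamma_half_nonneg d)
    _ ≤ 2 / Gamma ((d : ℝ) / 2) *
          (m ! * (exp (1 / (2 * ε) + 1 / 4) * exp ((1 + ε / 2) * μ)) * √π) := by gcongr
    _ = ouIConst d m ε * exp ((1 + ε / 2) * μ) := by unfold ouIConst; ring

lemma rpow_ouI_le (d m : ℕ) {p μ ε : ℝ} (hp : 1 ≤ p) (hμ : 0 ≤ μ) (hε : 0 < ε) :
    ouI d m μ ^ (1 / p) ≤ ouIConst d m ε ^ (1 / p) * exp ((1 + ε / 2) * μ) := by
  have hp₀ : 0 < p := zero_lt_one.trans_le hp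
  calc ouI d m μ ^ (1 / p) ≤ (ouIConst d m ε * exp ((1 + ε / 2) * μ)) ^ (1 / p) :=
        rpow_le_rpow (ouI_nonneg d m μ) (ouI_le d m hμ hε) (by positivity)
    _ = ouIConst d m ε ^ (1 / p) * exp ((1 + ε / 2) * μ / p) := by
        rw [mul_rpow (ouIConst_nonneg d m ε) (exp_nonneg _), ← exp_mul, mul_one_div]
    _ ≤ ouIConst d m ε ^ (1 / p) * exp ((1 + ε / 2) * μ) := by
        refine mul_le_mul_of_nonneg_left (exp_le_exp.2 (div_le_self ?_ hp))
          (rpow_nonneg (ouIConst_nonneg d m ε) _)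
        have := hε.le
        positivity

lemma exp_mul_rpow_ouI_le (d m : ℕ) {p ε ν b r t : ℝ} (hp : 1 ≤ p) (hε : 0 < ε) (hν : 0 ≤ ν)
    (ht : 0 ≤ t) (hrate : (1 + ε / 2) * ν + r ≤ b) :
    exp (-b * t) * ouI d m (ν * t) ^ (1 / p) ≤ ouIConst d m ε ^ (1 / p) * exp (-(r * t)) :=
  calc exp (-b * t) * ouI d m (ν * t) ^ (1 / p)
      ≤ exp (-b * t) * (ouIConst d m ε ^ (1 / p) * exp ((1 + ε / 2) * (ν * t))) :=
        mul_le_mul_of_nonneg_left (rpow_ouI_le d m hp (by positivity) hε) (exp_nonneg _)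
    _ = ouIConst d m ε ^ (1 / p) * exp (-b * t + (1 + ε / 2) * (ν * t)) := by
        rw [exp_add]; ring
    _ ≤ ouIConst d m ε ^ (1 / p) * exp (-(r * t)) := by
        refine mul_le_mul_of_nonneg_left (exp_le_exp.2 ?_) (rpow_nonneg (ouIConst_nonneg d m ε) _)
        nlinarith

lemma setIntegral_exp_mul_rpow_ouI_le (d m : ℕ) {p ε ν lam δ r c : ℝ} (hp : 1 ≤ p)
    (hε : 0 < ε) (hν : 0 ≤ ν) (hr : 0 < r) (hc : 0 ≤ c) (hrate : (1 + ε / 2) * ν + r ≤ lam + δ) :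
    ∫ t in Ioi 0, exp (-lam * t) * (c * exp (-δ * t) * ouI d m (ν * t) ^ (1 / p))
      ≤ c * ouIConst d m ε ^ (1 / p) / r := by
  have key := setIntegral_Ioi_le_of_le_rpow_mul_exp (A := c * ouIConst d m ε ^ (1 / p))
    (f := fun t ↦ exp (-lam * t) * (c * exp (-δ * t) * ouI d m (ν * t) ^ (1 / p))) one_pos hr
    (fun t _ ↦ by have := ouI_nonneg d m (ν * t); positivity) fun t ht ↦ ?_
  · simpa using key
  calc exp (-lam * t) * (c * exp (-δ * t) * ouI d m (ν * t) ^ (1 / p))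
      = c * (exp (-(lam + δ) * t) * ouI d m (ν * t) ^ (1 / p)) := by
        rw [neg_add, add_mul, exp_add]; ring
    _ ≤ c * (ouIConst d m ε ^ (1 / p) * exp (-(r * t))) :=
        mul_le_mul_of_nonneg_left (exp_mul_rpow_ouI_le d m hp hε hν ht.le hrate) hc
    _ = c * ouIConst d m ε ^ (1 / p) * (t ^ ((1 : ℝ) - 1) * exp (-(r * t))) := by
        rw [sub_self, rpow_zero]; ring

lemma setIntegral_exp_mul_rpow_mul_rpow_ouI_le (d m : ℕ) {p ε ν lam δ r c a : ℝ} (hp : 1 ≤ p)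
    (hε : 0 < ε) (hν : 0 ≤ ν) (hr : 0 < r) (hc : 0 ≤ c) (ha : 0 ≤ a)
    (hrate : (1 + ε / 2) * ν + r ≤ lam + δ) :
    ∫ t in Ioi 0, exp (-lam * t) *
        (c * exp (-δ * t) * (t * a) ^ (-(1 : ℝ) / 2) * ouI d m (ν * t) ^ (1 / p))
      ≤ c * a ^ (-(1 : ℝ) / 2) * ouIConst d m ε ^ (1 / p) * √π / √r := by
  have key := setIntegral_Ioi_le_of_le_rpow_mul_exp (a := 1 / 2)
    (A := c * a ^ (-(1 : ℝ) / 2) * ouIConst d m ε ^ (1 / p))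
    (f := fun t ↦ exp (-lam * t) *
        (c * exp (-δ * t) * (t * a) ^ (-(1 : ℝ) / 2) * ouI d m (ν * t) ^ (1 / p))) one_half_pos hr
    (fun t ht ↦ by have := ouI_nonneg d m (ν * t); have : (0 : ℝ) < t := ht; positivity)
    fun t ht ↦ ?_
  · rwa [Gamma_one_half_eq, ← sqrt_eq_rpow] at key
  calc exp (-lam * t) * (c * exp (-δ * t) * (t * a) ^ (-(1 : ℝ) / 2) * ouI d m (ν * t) ^ (1 / p))
      = c * a ^ (-(1 : ℝ) / 2) * t ^ (-(1 : ℝ) / 2) *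
          (exp (-(lam + δ) * t) * ouI d m (ν * t) ^ (1 / p)) := by
        rw [neg_add, add_mul, exp_add, mul_rpow (le_of_lt ht) ha]; ring
    _ ≤ c * a ^ (-(1 : ℝ) / 2) * t ^ (-(1 : ℝ) / 2) *
          (ouIConst d m ε ^ (1 / p) * exp (-(r * t))) :=
        mul_le_mul_of_nonneg_left (exp_mul_rpow_ouI_le d m hp hε hν (le_of_lt ht) hrate)
          (by have : (0 : ℝ) < t := ht; positivity)
    _ = c * a ^ (-(1 : ℝ) / 2) * ouIConst d m ε ^ (1 / p) *
          (t ^ ((1 : ℝ) / 2 - 1) * exp (-(r * t))) := by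
        rw [show (1 : ℝ) / 2 - 1 = -1 / 2 by norm_num]; ring

/-- bounds for the Laplace-type integrals of `C₄` and `C₅`, with constants
independent of `ω`, `λ` and `η`. -/
theorem laplace_integral_bounds_C4_C5
    (d : ℕ) (hd : 1 ≤ d) (α : ℂ) (hα : 0 < α.re)
    (p : ℝ) (hp : 1 ≤ p) (ϑ : ℝ) (hϑ₀ : 0 < ϑ) (hϑ₁ : ϑ < 1)
    (Cθ : ℝ) (hCθ : 0 < Cθ) :
    ∃ C₇ > (0:ℝ), ∃ C₈ > (0:ℝ), ∀ δ : ℂ, ∀ ω : ℝ, -δ.re ≤ ω →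
      ∀ lam : ℂ, ω < lam.re →
      ∀ η : ℝ, 0 ≤ η →
        η ^ 2 ≤ ϑ * (α.re * (lam.re - ω)) / (‖α‖ ^ 2 * p ^ 2) →
      (∫ t in Set.Ioi (0:ℝ), Real.exp (-lam.re * t) *
          (Cθ * (‖α‖ / α.re) ^ ((d : ℝ) / 2) * Real.exp (-δ.re * t) *
            (ouI d (d - 1) ((‖α‖ ^ 2 * η ^ 2 * p ^ 2 / α.re) * t)) ^ (1 / p)))
        ≤ C₇ / (lam.re - ω) ∧
      (∫ t in Set.Ioi (0:ℝ), Real.exp (-lam.re * t) *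
          (Cθ * (‖α‖ / α.re) ^ (((d : ℝ) + 1) / 2) * Real.exp (-δ.re * t) *
            (t * ‖α‖) ^ (-(1:ℝ) / 2) *
            (ouI d d ((‖α‖ ^ 2 * η ^ 2 * p ^ 2 / α.re) * t)) ^ (1 / p)))
        ≤ C₈ / Real.sqrt (lam.re - ω) := by
  set ε := (1 - ϑ) / ϑ
  set κ := (1 - ϑ) / 2
  have hε : 0 < ε := div_pos (by linarith) hϑ₀
  have hκ : 0 < κ := by positivity
  have hα' : 0 < ‖α‖ := norm_pos_iff.2 fun h ↦ by simp [h] at hα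
  have ha₁ : 0 < ‖α‖ / α.re := div_pos hα' hα
  have hK₁ := ouIConst_pos hd (d - 1) ε
  have hK₂ := ouIConst_pos hd d ε
  refine ⟨Cθ * (‖α‖ / α.re) ^ ((d : ℝ) / 2) * ouIConst d (d - 1) ε ^ (1 / p) / κ, by positivity,
    Cθ * (‖α‖ / α.re) ^ (((d : ℝ) + 1) / 2) * ‖α‖ ^ (-(1 : ℝ) / 2) * ouIConst d d ε ^ (1 / p) *
      √π / √κ, by positivity, fun δ ω hω lam hlam η _ hη₂ ↦ ?_⟩
  set X := lam.re - ω
  have hX : 0 < X := sub_pos.2 hlam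
  have hν : ‖α‖ ^ 2 * η ^ 2 * p ^ 2 / α.re ≤ ϑ * X := by
    rw [le_div_iff₀ (by positivity)] at hη₂
    rw [div_le_iff₀ hα]
    linarith
  have hrate : (1 + ε / 2) * (‖α‖ ^ 2 * η ^ 2 * p ^ 2 / α.re) + κ * X ≤ lam.re + δ.re := by
    have : (1 + ε / 2) * ϑ = 1 - κ := by simp only [ε, κ]; field_simp; ring
    nlinarith
  constructor
  · refine (setIntegral_exp_mul_rpow_ouI_le d (d - 1) hp hε (by positivity) (mul_pos hκ hX)
      (by positivity) hrate).trans_eq ?_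
    field_simp
  · refine (setIntegral_exp_mul_rpow_mul_rpow_ouI_le d d hp hε (by positivity) (mul_pos hκ hX)
      (by positivity) hα'.le hrate).trans_eq ?_
    rw [sqrt_mul hκ.le]
    field_simp
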